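/- For 0 ≤ a < 1/√2 and u(a) = (√2 - a)/√(1-a²), v(a) = (√2 + a)/√(1-a²), and g(x) = (c₁/250)(251Φ̄(x) + φ(x)) with c₁ = 1/(4Φ̄(√2)): k(a) := 1/(2u(a)²) + g(v(a)) - 2g(√2) ≤ 0, with k(0) < 0. -/

import Mathlib

/-!
On a cell `p ≤ a ≤ q` we have `u(a)² ≥ r` and `v(a) ≥ w` for rational `r, w` computed from the
endpoints, and `g` is decreasing on `[0, ∞)`, so `k(a) ≤ 1/(2r) + g(w) - 2 g(√2)`. After
multiplication by `1000 Φ̄(√2)` this is bounded by rationals: `Φ̄(w)` through Sampford's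
inequality `Φ̄(x) ≤ φ(x) · 4 / (3x + √(x² + 8))`, `φ(w)` through a partial sum of the exponential
series, and `Φ̄(√2) ≥ 0.0786` by integrating a Taylor polynomial of `exp (-t²/2)` over `[0, √2]`.
The resulting rational inequality is checked by kernel evaluation on the cells of a bisection of
`[0, 0.7072] ⊇ [0, 1/√2)`; the margin is smallest near `a = 1/√2`, where `k ≈ -0.0013`.
At `a = 0` no estimate is needed: `k(0) = 1/4 - g(√2)` and `g(√2) > 251/1000`.
-/

open MeasureTheory Real Set

noncomputable def phi (x : ℝ) : ℝ := Real.exp (-x^2/2) / Real.sqrt (2*Real.pi)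
noncomputable def Phibar (x : ℝ) : ℝ := ∫ u in Set.Ioi x, phi u
noncomputable def c1 : ℝ := 1 / (4 * Phibar (Real.sqrt 2))
noncomputable def g (x : ℝ) : ℝ := c1/250 * (251 * Phibar x + phi x)
noncomputable def uX (a : ℝ) : ℝ := (Real.sqrt 2 - a) / Real.sqrt (1 - a^2)
noncomputable def vX (a : ℝ) : ℝ := (Real.sqrt 2 + a) / Real.sqrt (1 - a^2)
noncomputable def kX (a : ℝ) : ℝ := 1/(2*(uX a)^2) + g (vX a) - 2 * g (Real.sqrt 2)

open Filter Topology Finset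
open scoped Nat

lemma phi_pos (x : ℝ) : 0 < phi x := by
  unfold phi
  positivity

lemma integrable_phi : Integrable phi := by
  refine ((integrable_exp_neg_mul_sq (b := 1 / 2) (by norm_num)).div_const
    √(2 * π)).congr (.of_forall fun x => ?_)
  simp only [phi]
  ring_nf

lemma hasDerivAt_phi (x : ℝ) : HasDerivAt phi (-x * phi x) x := by
  have h : HasDerivAt (fun t : ℝ => -t ^ 2 / 2) (-x) x :=
    ((hasDerivAt_pow 2 x).neg.div_const 2).congr_deriv (by push_cast; ring)
  unfold phi
  exact (h.exp.div_const √(2 * π)).congr_deriv (by ring)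

lemma tendsto_phi_atTop : Tendsto phi atTop (𝓝 0) := by
  have h : Tendsto (fun x : ℝ => -x ^ 2 / 2) atTop atBot :=
    (tendsto_div_const_atBot_of_pos two_pos).2
      (tendsto_neg_atTop_atBot.comp (tendsto_pow_atTop two_ne_zero))
  have h' := (tendsto_exp_atBot.comp h).div_const √(2 * π)
  rw [zero_div] at h'
  exact h'

lemma phi_le_phi {x y : ℝ} (hx : 0 ≤ x) (hxy : x ≤ y) : phi y ≤ phi x := by
  unfold phi
  gcongr

lemma Phibar_antitone : Antitone Phibar := fun _ _ hxy =>
  setIntegral_mono_set integrable_phi.integrableOn (.of_forall fun t => (phi_pos t).le)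
    (Ioi_subset_Ioi hxy).eventuallyLE

lemma Phibar_eq_half_sub {x : ℝ} (hx : 0 ≤ x) : Phibar x = 1 / 2 - ∫ t in 0..x, phi t := by
  have hhalf : ∫ t in Ioi (0 : ℝ), phi t = 1 / 2 := by
    have h : ∀ t, phi t = exp (-(1 / 2) * t ^ 2) / √(2 * π) := fun t => by
      rw [phi]; ring_nf
    simp only [h, integral_div, integral_gaussian_Ioi]
    rw [show π / (1 / 2) = 2 * π by ring]
    field_simp
  rw [intervalIntegral.integral_of_le hx, ← hhalf, ← Ioc_union_Ioi_eq_Ioi hx,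
    setIntegral_union (Ioc_disjoint_Ioi le_rfl) measurableSet_Ioi integrable_phi.integrableOn
      integrable_phi.integrableOn, Phibar]
  ring

lemma exp_neg_le_sum_add {x : ℝ} (hx0 : 0 ≤ x) (hx1 : x ≤ 1) {n : ℕ} (hn : 0 < n) :
    exp (-x) ≤ ∑ i ∈ range n, (-x) ^ i / i ! + x ^ n * ((n + 1) / (n ! * n)) := by
  have h := Real.exp_bound (x := -x) (by rwa [abs_neg, abs_of_nonneg hx0]) hn
  rw [abs_neg, abs_of_nonneg hx0, Nat.cast_succ] at h
  linarith [(abs_sub_le_iff.1 h).1]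

lemma integral_exp_neg_sq_div_two_le :
    ∫ t in 0..√2, exp (-t ^ 2 / 2) ≤ 8784261481 / 11762150400 * √2 := by
  have h2 : √2 ^ 2 = 2 := sq_sqrt zero_le_two
  have hpoint : ∀ t ∈ Icc 0 √2,
      exp (-t ^ 2 / 2) ≤
        ∑ i ∈ range 8, (-1 / 2) ^ i / i ! * t ^ (2 * i) + 9 / 82575360 * t ^ 16 := by
    rintro t ⟨ht0, ht⟩
    have hbound := exp_neg_le_sum_add (x := t ^ 2 / 2) (by positivity) (by nlinarith) (n := 8)
      (by norm_num)
    have hterm : ∀ i : ℕ, (-(t ^ 2 / 2)) ^ i / i ! = (-1 / 2) ^ i / i ! * t ^ (2 * i) := fun i => by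
      rw [pow_mul]; ring
    rw [neg_div]
    refine hbound.trans_eq ?_
    simp only [hterm, Nat.factorial]
    ring
  refine (intervalIntegral.integral_mono_on (sqrt_nonneg 2)
    ((by fun_prop : Continuous _).intervalIntegrable _ _)
    ((by fun_prop : Continuous _).intervalIntegrable _ _) hpoint).trans_eq ?_
  rw [intervalIntegral.integral_add ((by fun_prop : Continuous _).intervalIntegrable _ _)
      ((by fun_prop : Continuous _).intervalIntegrable _ _),
    intervalIntegral.integral_finsetSum fun _ _ =>
      (by fun_prop : Continuous _).intervalIntegrable _ _]
  simp only [intervalIntegral.integral_const_mul, integral_pow]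
  have hodd : ∀ n : ℕ, √2 ^ (2 * n + 1) = 2 ^ n * √2 := fun n => by rw [pow_succ, pow_mul, h2]
  simp only [hodd, Finset.sum_range_succ, Finset.sum_range_zero, show 16 + 1 = 2 * 8 + 1 from rfl]
  norm_num [Nat.factorial]
  ring

lemma Phibar_sqrt_two_ge : (0.0786 : ℝ) ≤ Phibar √2 := by
  have hπ : (1.7724 : ℝ) ≤ √π := le_sqrt_of_sq_le (by nlinarith [pi_gt_d6])
  have hint : ∫ t in 0..√2, phi t = (∫ t in 0..√2, exp (-t ^ 2 / 2)) / (√2 * √π) := by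
    rw [← sqrt_mul zero_le_two, ← intervalIntegral.integral_div]
    rfl
  rw [Phibar_eq_half_sub (sqrt_nonneg 2), hint, div_mul_eq_div_div]
  have hI : (∫ t in 0..√2, exp (-t ^ 2 / 2)) / √2 ≤ 8784261481 / 11762150400 :=
    (div_le_iff₀ (by positivity)).2 integral_exp_neg_sq_div_two_le
  have hI' : (∫ t in 0..√2, exp (-t ^ 2 / 2)) / √2 / √π ≤ 0.4214 := by
    rw [div_le_iff₀ (by positivity)]; nlinarith
  linarith

lemma phi_sqrt_two_ge : (0.1467 : ℝ) ≤ phi √2 := by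
  have hs : √(2 * π) ≤ 2.5067 := sqrt_le_iff.2 ⟨by norm_num, by nlinarith [pi_lt_d4]⟩
  have he : (0.3678 : ℝ) ≤ exp (-1) := by
    rw [exp_neg, le_inv_comm₀ (by norm_num) (exp_pos 1)]
    linarith [exp_one_lt_d9]
  rw [phi, sq_sqrt zero_le_two, show -(2 : ℝ) / 2 = -1 by norm_num, le_div_iff₀ (by positivity)]
  nlinarith

lemma sqrt_two_pi_ge : (2.5066 : ℝ) ≤ √(2 * π) :=
  le_sqrt_of_sq_le (by nlinarith [pi_gt_d6])

lemma sqrt_two_ge : (1.4142 : ℝ) ≤ √2 :=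
  le_sqrt_of_sq_le (by norm_num)

lemma integral_Ioi_le_neg_of_hasDerivAt {f G G' : ℝ → ℝ} {x : ℝ}
    (hderiv : ∀ u ∈ Ici x, HasDerivAt G (G' u) u) (hf : IntegrableOn f (Ioi x))
    (hf0 : ∀ u ∈ Ioi x, 0 ≤ f u) (hfG : ∀ u ∈ Ioi x, f u ≤ G' u)
    (hG : Tendsto G atTop (𝓝 0)) : ∫ u in Ioi x, f u ≤ -G x := by
  have hG' : IntegrableOn G' (Ioi x) :=
    integrableOn_Ioi_deriv_of_nonneg' hderiv (fun u hu => (hf0 u hu).trans (hfG u hu)) hG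
  calc ∫ u in Ioi x, f u ≤ ∫ u in Ioi x, G' u := setIntegral_mono_on hf hG' measurableSet_Ioi hfG
    _ = -G x := by rw [integral_Ioi_of_hasDerivAt_of_tendsto' hderiv hG' hG, zero_sub]

-- Sampford's upper bound for the Mills ratio `Φ̄(x) / φ(x)`.
noncomputable def millsBound (x : ℝ) : ℝ := 4 / (3 * x + √(x ^ 2 + 8))

lemma hasDerivAt_millsBound {x : ℝ} (hx : 0 ≤ x) :
    HasDerivAt millsBound (-(4 * (3 + x / √(x ^ 2 + 8))) / (3 * x + √(x ^ 2 + 8)) ^ 2) x := by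
  have hsqrt : HasDerivAt (fun t => √(t ^ 2 + 8)) (x / √(x ^ 2 + 8)) x := by
    refine (((hasDerivAt_pow 2 x).add_const 8).sqrt (by positivity)).congr_deriv ?_
    field_simp
    push_cast
    ring
  have hden : HasDerivAt (fun t => 3 * t + √(t ^ 2 + 8)) (3 + x / √(x ^ 2 + 8)) x :=
    (((hasDerivAt_id x).const_mul 3).add hsqrt).congr_deriv (by simp)
  exact ((hasDerivAt_const x 4).div hden (by positivity)).congr_deriv (by ring)

lemma one_le_mul_millsBound_add {x : ℝ} (hx : 0 ≤ x) :
    1 ≤ x * millsBound x + 4 * (3 + x / √(x ^ 2 + 8)) / (3 * x + √(x ^ 2 + 8)) ^ 2 := by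
  rw [millsBound]
  set s := √(x ^ 2 + 8)
  have hs : 0 < s := sqrt_pos.2 (by positivity)
  have hs2 : s ^ 2 = x ^ 2 + 8 := sq_sqrt (by positivity)
  have key : x * (x ^ 2 + 6) ≤ s * (x ^ 2 + 2) := by
    have hsq : (s * (x ^ 2 + 2)) ^ 2 = (x * (x ^ 2 + 6)) ^ 2 + 32 := by rw [mul_pow, hs2]; ring
    nlinarith [mul_pos hs (show (0 : ℝ) < x ^ 2 + 2 by positivity)]
  have hsum : x * (4 / (3 * x + s)) + 4 * (3 + x / s) / (3 * x + s) ^ 2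
      = (4 * x * (3 * x + s) * s + 12 * s + 4 * x) / ((3 * x + s) ^ 2 * s) := by
    field_simp
    ring
  rw [hsum, le_div_iff₀ (by positivity)]
  nlinarith

lemma tendsto_millsBound_atTop : Tendsto millsBound atTop (𝓝 0) :=
  tendsto_const_nhds.div_atTop <| tendsto_atTop_mono
    (fun _ => le_add_of_nonneg_right (sqrt_nonneg _)) (tendsto_id.const_mul_atTop three_pos)

lemma Phibar_le_phi_mul_millsBound {x : ℝ} (hx : 0 ≤ x) : Phibar x ≤ phi x * millsBound x := by
  have h := integral_Ioi_le_neg_of_hasDerivAt (f := phi) (G := fun u => -(phi u * millsBound u))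
    (G' := fun u =>
      phi u * (u * millsBound u + 4 * (3 + u / √(u ^ 2 + 8)) / (3 * u + √(u ^ 2 + 8)) ^ 2))
    (fun u hu => ((hasDerivAt_phi u).mul (hasDerivAt_millsBound (hx.trans hu))).neg.congr_deriv
      (by ring))
    integrable_phi.integrableOn (fun u _ => (phi_pos u).le)
    (fun u hu => le_mul_of_one_le_right (phi_pos u).le
      (one_le_mul_millsBound_add (hx.trans hu.out.le)))
    (by simpa using (tendsto_phi_atTop.mul tendsto_millsBound_atTop).neg)
  simpa [Phibar] using h

lemma uX_sq {a : ℝ} (ha : a ^ 2 < 1) : uX a ^ 2 = (√2 - a) ^ 2 / (1 - a ^ 2) := by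
  rw [uX, div_pow, sq_sqrt (by linarith)]

lemma vX_sq {a : ℝ} (ha : a ^ 2 < 1) : vX a ^ 2 = (√2 + a) ^ 2 / (1 - a ^ 2) := by
  rw [vX, div_pow, sq_sqrt (by linarith)]

lemma one_le_uX_sq {a : ℝ} (ha : a ^ 2 < 1) : 1 ≤ uX a ^ 2 := by
  rw [uX_sq ha, le_div_iff₀ (by linarith)]
  nlinarith [sq_nonneg (√2 * a - 1), sq_sqrt (zero_le_two : (0 : ℝ) ≤ 2)]

lemma uX_sq_le_uX_sq {a q : ℝ} (ha : 0 ≤ a) (haq : a ≤ q) (hq : 2 * q ^ 2 ≤ 1) :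
    uX q ^ 2 ≤ uX a ^ 2 := by
  have h2 : √2 ^ 2 = 2 := sq_sqrt zero_le_two
  have hβ : √2 * q ≤ 1 := by nlinarith [sqrt_nonneg 2]
  have hα : √2 * a ≤ 1 := by nlinarith [sqrt_nonneg 2]
  have hF : 0 ≤ (1 - √2 * q) * (3 / 2 - √2 * a) + (1 - √2 * a) / 2 := by
    have := mul_nonneg (sub_nonneg.2 hβ) (show 0 ≤ 3 / 2 - √2 * a by linarith)
    linarith
  rw [uX_sq (by nlinarith), uX_sq (by nlinarith), div_le_div_iff₀ (by nlinarith) (by nlinarith)]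
  have hid : (√2 - a) ^ 2 * (1 - q ^ 2) - (√2 - q) ^ 2 * (1 - a ^ 2)
      = (q - a) * √2 * ((1 - √2 * q) * (3 / 2 - √2 * a) + (1 - √2 * a) / 2) := by
    linear_combination ((a ^ 2 - q ^ 2) - (q - a) * (√2 * a * q - 3 / 2 * (a + q))) * h2
  nlinarith [mul_nonneg (mul_nonneg (sub_nonneg.2 haq) (sqrt_nonneg 2)) hF]

lemma vX_sq_ge {p a : ℝ} (hp : 0 ≤ p) (hpa : p ≤ a) (ha : a < 1) :
    (√2 + p) ^ 2 / (1 - p ^ 2) ≤ vX a ^ 2 := by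
  rw [vX_sq (by nlinarith)]
  gcongr
  nlinarith

lemma g_eq (x : ℝ) : g x = (251 * Phibar x + phi x) / (1000 * Phibar √2) := by
  rw [g, c1]
  field_simp
  ring

lemma g_le_g {x y : ℝ} (hx : 0 ≤ x) (hxy : x ≤ y) : g y ≤ g x := by
  have hP : 0 < Phibar √2 := by linarith [Phibar_sqrt_two_ge]
  rw [g_eq, g_eq]
  gcongr ?_ / _
  linarith [Phibar_antitone hxy, phi_le_phi hx hxy]

lemma kX_nonpos_of_bounds {a r w Φw φw : ℝ} (hr : 0 < r) (hru : r ≤ uX a ^ 2)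
    (hr' : 1 / (2 * r) ≤ 251 / 500) (hw : 0 ≤ w) (hwv : w ≤ vX a) (hΦ : Phibar w ≤ Φw)
    (hφ : phi w ≤ φw)
    (h : (1 / (2 * r) - 251 / 500) * 1000 * 0.0786 + 251 * Φw + φw - 2 * 0.1467 ≤ 0) :
    kX a ≤ 0 := by
  have hP := Phibar_sqrt_two_ge
  have hE := phi_sqrt_two_ge
  have hu : 1 / (2 * uX a ^ 2) ≤ 1 / (2 * r) :=
    one_div_le_one_div_of_le (by positivity) (by linarith)
  have hg := g_le_g hw hwv
  have hk : 1 / (2 * r) + g w - 2 * g √2 = ((1 / (2 * r) - 251 / 500) * 1000 * Phibar √2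
      + 251 * Phibar w + phi w - 2 * phi √2) / (1000 * Phibar √2) := by
    rw [g_eq, g_eq]
    field_simp
    ring
  have hnum : (1 / (2 * r) - 251 / 500) * 1000 * Phibar √2 + 251 * Phibar w + phi w - 2 * phi √2
      ≤ 0 := by nlinarith
  have := div_nonpos_of_nonpos_of_nonneg hnum (by positivity : (0 : ℝ) ≤ 1000 * Phibar √2)
  rw [kX]
  linarith

def sqrtLB (k : ℕ) (x : ℚ) : ℚ := Nat.sqrt ⌊x * k ^ 2⌋₊ / k

lemma sqrtLB_nonneg (k : ℕ) (x : ℚ) : 0 ≤ sqrtLB k x := by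
  unfold sqrtLB
  positivity

lemma sqrtLB_le_sqrt (k : ℕ) {x : ℚ} (hx : 0 ≤ x) : (sqrtLB k x : ℝ) ≤ √(x : ℝ) := by
  rcases Nat.eq_zero_or_pos k with rfl | hk
  · simp [sqrtLB]
  have hk' : (0 : ℝ) < k := by exact_mod_cast hk
  rw [sqrtLB, Rat.cast_div, Rat.cast_natCast, Rat.cast_natCast, div_le_iff₀ hk',
    ← sqrt_sq hk'.le, ← sqrt_mul (by exact_mod_cast hx)]
  apply le_sqrt_of_sq_le
  calc (Nat.sqrt ⌊x * k ^ 2⌋₊ : ℝ) ^ 2 ≤ ⌊x * k ^ 2⌋₊ := by exact_mod_cast Nat.sqrt_le' _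
    _ ≤ ((x * k ^ 2 : ℚ) : ℝ) := by exact_mod_cast Nat.floor_le (by positivity)
    _ = x * k ^ 2 := by push_cast; ring

def expNegUB (n : ℕ) (c : ℚ) : ℚ := (∑ i ∈ range n, c ^ i / i !)⁻¹

lemma exp_neg_le_expNegUB {n : ℕ} (hn : 0 < n) {c : ℚ} (hc : 0 ≤ c) :
    exp (-(c : ℝ)) ≤ expNegUB n c := by
  have hc' : (0 : ℝ) ≤ c := by exact_mod_cast hc
  have hpos : 0 < ∑ i ∈ range n, (c : ℝ) ^ i / i ! :=
    Finset.sum_pos' (fun i _ => by positivity) ⟨0, by simpa using hn, by simp⟩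
  push_cast [expNegUB]
  rw [exp_neg]
  exact inv_anti₀ hpos (sum_le_exp_of_nonneg hc' n)

-- `u²` decreases on `[0, 1/√2]` and is at least `1` on `(-1, 1)`.
def uSqLB (q : ℚ) : ℚ := if 2 * q ^ 2 ≤ 1 then (1.4142 - q) ^ 2 / (1 - q ^ 2) else 1

def vLB (p : ℚ) : ℚ := sqrtLB 1000 ((1.4142 + p) ^ 2 / (1 - p ^ 2))

def phiUB (w : ℚ) : ℚ := expNegUB 16 (w ^ 2 / 2) / 2.5066

def PhibarUB (w : ℚ) : ℚ := phiUB w * (4 / (3 * w + sqrtLB 1000 (w ^ 2 + 8)))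

lemma uSqLB_pos {q : ℚ} (hq : q < 1) : 0 < uSqLB q := by
  unfold uSqLB
  split_ifs with h
  · exact div_pos (by nlinarith) (by nlinarith)
  · exact one_pos

lemma uSqLB_le_uX_sq {q : ℚ} {a : ℝ} (ha : 0 ≤ a) (haq : a ≤ q) (hq : q < 1) :
    (uSqLB q : ℝ) ≤ uX a ^ 2 := by
  have hq' : (q : ℝ) < 1 := by exact_mod_cast hq
  unfold uSqLB
  split_ifs with h
  · have h' : 2 * (q : ℝ) ^ 2 ≤ 1 := by exact_mod_cast h
    refine le_trans ?_ (uX_sq_le_uX_sq ha haq h')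
    rw [uX_sq (by nlinarith)]
    push_cast
    gcongr
    · linarith
    · linarith
    · exact sqrt_two_ge
  · push_cast
    exact one_le_uX_sq (by nlinarith)

lemma vLB_le_vX {p : ℚ} {a : ℝ} (hp : 0 ≤ p) (hpa : p ≤ a) (ha : a < 1) : (vLB p : ℝ) ≤ vX a := by
  have hp0 : (0 : ℝ) ≤ p := by exact_mod_cast hp
  have hp1 : (p : ℝ) < 1 := hpa.trans_lt ha
  have hv : 0 ≤ vX a := div_nonneg (by linarith [sqrt_nonneg 2]) (sqrt_nonneg _)
  have hp1' : p < 1 := by exact_mod_cast hp1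
  refine (sqrtLB_le_sqrt 1000 (div_nonneg (sq_nonneg _) (by nlinarith))).trans ?_
  rw [sqrt_le_left hv]
  refine le_trans ?_ (vX_sq_ge hp0 hpa ha)
  push_cast
  gcongr
  · nlinarith
  · linarith [sqrt_two_ge]

lemma phi_le_phiUB (w : ℚ) : phi w ≤ phiUB w := by
  rw [phi, phiUB, Rat.cast_div, neg_div]
  have h := exp_neg_le_expNegUB (n := 16) (by norm_num) (c := w ^ 2 / 2) (by positivity)
  push_cast at h
  exact div_le_div₀ ((exp_pos _).le.trans h) h (by norm_num) sqrt_two_pi_ge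

lemma Phibar_le_PhibarUB {w : ℚ} (hw : 0 < w) : Phibar w ≤ PhibarUB w := by
  have hw' : (0 : ℝ) < w := by exact_mod_cast hw
  have hs := sqrtLB_le_sqrt 1000 (show 0 ≤ w ^ 2 + 8 by positivity)
  have hs0 : (0 : ℝ) ≤ sqrtLB 1000 (w ^ 2 + 8) := by exact_mod_cast sqrtLB_nonneg _ _
  refine (Phibar_le_phi_mul_millsBound hw'.le).trans ?_
  rw [PhibarUB, Rat.cast_mul, millsBound]
  push_cast at hs ⊢
  gcongr
  · exact (phi_pos _).le.trans (phi_le_phiUB w)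
  · exact phi_le_phiUB w

def cellCertified (p q : ℚ) : Bool :=
  0 ≤ p ∧ q < 1 ∧ 0 < vLB p ∧ 1 / (2 * uSqLB q) ≤ 251 / 500 ∧
    (1 / (2 * uSqLB q) - 251 / 500) * 1000 * 0.0786 + 251 * PhibarUB (vLB p) + phiUB (vLB p)
      - 2 * 0.1467 ≤ 0

lemma kX_nonpos_of_cellCertified {p q : ℚ} (h : cellCertified p q) {a : ℝ} (hpa : p ≤ a)
    (haq : a ≤ q) : kX a ≤ 0 := by
  obtain ⟨hp, hq, hw, hr, hmain⟩ := of_decide_eq_true h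
  have ha : a < 1 := haq.trans_lt (by exact_mod_cast hq)
  have hr' := (Rat.cast_le (K := ℝ)).2 hr
  have hmain' := (Rat.cast_le (K := ℝ)).2 hmain
  push_cast at hr' hmain'
  exact kX_nonpos_of_bounds (r := uSqLB q) (w := vLB p) (by exact_mod_cast uSqLB_pos hq)
    (uSqLB_le_uX_sq ((Rat.cast_nonneg.2 hp).trans hpa) haq hq) hr'
    (by exact_mod_cast hw.le) (vLB_le_vX hp hpa ha) (Phibar_le_PhibarUB hw) (phi_le_phiUB _)
    hmain'

def certifiedByBisection : ℕ → ℚ → ℚ → Bool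
  | 0, p, q => cellCertified p q
  | n + 1, p, q => cellCertified p q ||
      (certifiedByBisection n p ((p + q) / 2) && certifiedByBisection n ((p + q) / 2) q)

lemma kX_nonpos_of_certifiedByBisection {n : ℕ} {p q : ℚ} (h : certifiedByBisection n p q)
    {a : ℝ} (hpa : p ≤ a) (haq : a ≤ q) : kX a ≤ 0 := by
  induction n generalizing p q with
  | zero => exact kX_nonpos_of_cellCertified h hpa haq
  | succ n ih =>
    simp only [certifiedByBisection, Bool.or_eq_true, Bool.and_eq_true] at h
    rcases h with hcell | ⟨hleft, hright⟩
    · exact kX_nonpos_of_cellCertified hcell hpa haq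
    · rcases le_total a ((p + q) / 2 : ℚ) with hm | hm
      · exact ih hleft hpa hm
      · exact ih hright hm haq

lemma certifiedByBisection_ten : certifiedByBisection 10 0 0.7072 := by
  decide +kernel

lemma kX_zero_lt : kX 0 < 0 := by
  have hP : 0 < Phibar √2 := by linarith [Phibar_sqrt_two_ge]
  have hu : uX 0 = √2 := by simp [uX]
  have hv : vX 0 = √2 := by simp [vX]
  have hk : kX 0 = -phi √2 / (1000 * Phibar √2) - 1 / 1000 := by
    rw [kX, hu, hv, sq_sqrt zero_le_two, g_eq]
    field_simp
    ring
  rw [hk]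
  have := div_pos (phi_pos √2) (by positivity : 0 < 1000 * Phibar √2)
  rw [neg_div]
  linarith

theorem lemma_X11 :
    (∀ a : ℝ, 0 ≤ a → a < 1/Real.sqrt 2 → kX a ≤ 0) ∧ kX 0 < 0 := by
  refine ⟨fun a ha0 ha => kX_nonpos_of_certifiedByBisection certifiedByBisection_ten
    (by simpa using ha0) ?_, kX_zero_lt⟩
  have h : 1 / √2 ≤ 0.7072 := by
    rw [div_le_iff₀ (by positivity)]
    linarith [sqrt_two_ge]
  push_cast
  linarith
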